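/- For all differentiable vector fields X, Y on ℂ^m one has L_E(∘)(X,Y) = X ∘ Y, i.e. [E, X∘Y] − [E,X]∘Y − X∘[E,Y] = X∘Y; that is, E is an Euler field for the truncated-polynomial multiplication on ℂ^m. -/

import Mathlib

/-!
Only two facts matter: `∘` is bilinear and `DE = id`. The latter gives `[E, Z] = DZ(E) − Z`,
and the Leibniz rule `D(X ∘ Y)(E) = DX(E) ∘ Y + X ∘ DY(E)` then cancels every derivative term
in `L_E(∘)(X, Y)`, leaving `− X ∘ Y + X ∘ Y + X ∘ Y = X ∘ Y`.
-/

open scoped BigOperators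

noncomputable section

/-- The truncated-polynomial multiplication on `ℂ^m ≅ ℂ[X]/(X^m)`:
`(u ∘ v)_k = Σ_{i+j=k} u_i v_j`. -/
def tmul {m : ℕ} (u v : Fin m → ℂ) : Fin m → ℂ :=
  fun k => ∑ i : Fin m, ∑ j : Fin m,
    if (i : ℕ) + (j : ℕ) = (k : ℕ) then u i * v j else 0

/-- The `i`-th standard basis vector of `ℂ^m` (zero if `i ≥ m`); `std 0` is the unit `e`. -/
def std {m : ℕ} (i : ℕ) : Fin m → ℂ := fun j => if (j : ℕ) = i then 1 else 0

/-- Lie bracket of vector fields on `ℂ^m`: `[X,Y](p) = DY(p)(X(p)) − DX(p)(Y(p))`. -/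
def bracket {m : ℕ} (X Y : (Fin m → ℂ) → Fin m → ℂ) : (Fin m → ℂ) → Fin m → ℂ :=
  fun p => fderiv ℂ Y p (X p) - fderiv ℂ X p (Y p)

/-- Pointwise truncated product of vector fields. -/
def pmul {m : ℕ} (X Y : (Fin m → ℂ) → Fin m → ℂ) : (Fin m → ℂ) → Fin m → ℂ :=
  fun p => tmul (X p) (Y p)

/-- Lie derivative of the multiplication `∘` along `X`:
`L_X(∘)(Y,Z) = [X, Y∘Z] − [X,Y]∘Z − Y∘[X,Z]`. -/
def lieD {m : ℕ} (X Y Z : (Fin m → ℂ) → Fin m → ℂ) : (Fin m → ℂ) → Fin m → ℂ :=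
  fun p => bracket X (pmul Y Z) p - tmul (bracket X Y p) (Z p) - tmul (Y p) (bracket X Z p)

/-- The Euler field `E(t) = (t_0 + a, t_1 + 1, t_2, …, t_{m−1})`. -/
def Efield {m : ℕ} (a : ℂ) : (Fin m → ℂ) → Fin m → ℂ :=
  fun p => p + a • std 0 + std 1

section

variable {m : ℕ}

def tmulₗ : (Fin m → ℂ) →ₗ[ℂ] (Fin m → ℂ) →ₗ[ℂ] (Fin m → ℂ) :=
  LinearMap.mk₂ ℂ tmul
    (fun u u' v => by
      ext k; simp only [tmul, Pi.add_apply, add_mul, ite_add_zero, Finset.sum_add_distrib])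
    (fun c u v => by
      ext k
      simp only [tmul, Pi.smul_apply, smul_eq_mul, Finset.mul_sum, mul_ite, mul_zero, mul_assoc])
    (fun u v v' => by
      ext k; simp only [tmul, Pi.add_apply, mul_add, ite_add_zero, Finset.sum_add_distrib])
    (fun c u v => by
      ext k
      simp only [tmul, Pi.smul_apply, smul_eq_mul, Finset.mul_sum, mul_ite, mul_zero,
        mul_left_comm])

def tmulL : (Fin m → ℂ) →L[ℂ] (Fin m → ℂ) →L[ℂ] (Fin m → ℂ) :=
  LinearMap.toContinuousLinearMap (LinearMap.toContinuousLinearMap.toLinearMap ∘ₗ tmulₗ)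

@[simp] lemma tmulL_apply (u v : Fin m → ℂ) : tmulL u v = tmul u v := rfl

lemma tmul_sub_left (u u' v : Fin m → ℂ) : tmul (u - u') v = tmul u v - tmul u' v := by
  simp only [← tmulL_apply, map_sub, sub_apply]

lemma tmul_sub_right (u v v' : Fin m → ℂ) : tmul u (v - v') = tmul u v - tmul u v' :=
  map_sub (tmulL u) v v'

lemma fderiv_pmul_apply {X Y : (Fin m → ℂ) → Fin m → ℂ} {p : Fin m → ℂ}
    (hX : DifferentiableAt ℂ X p) (hY : DifferentiableAt ℂ Y p) (v : Fin m → ℂ) :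
    fderiv ℂ (pmul X Y) p v = tmul (fderiv ℂ X p v) (Y p) + tmul (X p) (fderiv ℂ Y p v) := by
  rw [show pmul X Y = fun q => tmulL (X q) (Y q) from rfl, tmulL.fderiv_of_bilinear hX hY]
  simp [add_comm]

lemma bracket_eq_of_hasFDerivAt_id {V : (Fin m → ℂ) → Fin m → ℂ} {p : Fin m → ℂ}
    (hV : HasFDerivAt V (ContinuousLinearMap.id ℂ _) p) (Z : (Fin m → ℂ) → Fin m → ℂ) :
    bracket V Z p = fderiv ℂ Z p (V p) - Z p := by
  simp [bracket, hV.fderiv]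

lemma hasFDerivAt_Efield (a : ℂ) (p : Fin m → ℂ) :
    HasFDerivAt (Efield a) (ContinuousLinearMap.id ℂ (Fin m → ℂ)) p :=
  ((hasFDerivAt_id p).add_const _).add_const _

lemma lieD_apply_of_hasFDerivAt_id {V X Y : (Fin m → ℂ) → Fin m → ℂ} {p : Fin m → ℂ}
    (hV : HasFDerivAt V (ContinuousLinearMap.id ℂ _) p)
    (hX : DifferentiableAt ℂ X p) (hY : DifferentiableAt ℂ Y p) :
    lieD V X Y p = tmul (X p) (Y p) := by
  simp only [lieD, bracket_eq_of_hasFDerivAt_id hV, fderiv_pmul_apply hX hY, pmul,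
    tmul_sub_left, tmul_sub_right]
  abel

end

theorem stmt2_general {m : ℕ} (a : ℂ)
    (X Y : (Fin m → ℂ) → Fin m → ℂ)
    (hX : Differentiable ℂ X) (hY : Differentiable ℂ Y) :
    lieD (Efield a) X Y = pmul X Y :=
  funext fun p => lieD_apply_of_hasFDerivAt_id (hasFDerivAt_Efield a p) (hX p) (hY p)

/-- `E` is an Euler field for the truncated-polynomial multiplication on
`ℂ^m`: for all differentiable vector fields `X, Y`, `L_E(∘)(X,Y) = X ∘ Y`, i.e.
`[E, X∘Y] − [E,X]∘Y − X∘[E,Y] = X∘Y`. -/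
theorem stmt2 {m : ℕ} (hm : 1 ≤ m) (a : ℂ)
    (X Y : (Fin m → ℂ) → Fin m → ℂ)
    (hX : Differentiable ℂ X) (hY : Differentiable ℂ Y) :
    lieD (Efield a) X Y = pmul X Y :=
  stmt2_general a X Y hX hY
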